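/- Let 0 < R_E < R_S be real numbers, let η ∈ [0, π/2], and let u, p be points of EuclideanSpace ℝ (Fin 3) with ‖u‖ = R_E and ‖p‖ = R_S. Then the satellite p lies within the user's service dome of angle η, i.e. ⟪p − u, u⟫ ≥ ‖p − u‖·‖u‖·cos η, if and only if dist u p ≤ √(R_S² − R_E²·sin²η) − R_E·cos η. -/

import Mathlib

open Real

/-! By the law of cosines, `⟪p - u, u⟫ = (R_S² - R_E² - d²) / 2` with `d = ‖p - u‖`, so the dome
condition is the quadratic inequality `d² + 2 (R_E cos η) d ≤ R_S² - R_E²`. Completing the square,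
this says `(d + R_E cos η)² ≤ R_S² - R_E² sin² η`, and both sides of `d + R_E cos η ≤ √(…)` are
nonnegative. -/

theorem real_inner_sub_left_self {E : Type*} [NormedAddCommGroup E] [InnerProductSpace ℝ E]
    (p u : E) : inner ℝ (p - u) u = (‖p‖ ^ 2 - ‖u‖ ^ 2 - ‖p - u‖ ^ 2) / 2 := by
  rw [inner_sub_left, real_inner_self_eq_norm_sq, norm_sub_sq_real]
  ring

theorem le_sqrt_add_sq_sub_iff {d k B : ℝ} (hdk : 0 ≤ d + k) (hB : 0 ≤ B) :
    d ≤ √(B + k ^ 2) - k ↔ d ^ 2 + 2 * k * d ≤ B := by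
  rw [le_sub_iff_add_le, le_sqrt hdk (by positivity)]
  constructor <;> intro h <;> nlinarith

theorem satellite_in_dome_iff_distance_le_general
    (R_E R_S : ℝ) (hES : R_E < R_S)
    (η : ℝ) (hη0 : 0 ≤ η) (hη1 : η ≤ π / 2)
    (u p : EuclideanSpace ℝ (Fin 3)) (hu : ‖u‖ = R_E) (hp : ‖p‖ = R_S) :
    (inner ℝ (p - u) u : ℝ) ≥ ‖p - u‖ * ‖u‖ * Real.cos η ↔
      dist u p ≤ Real.sqrt (R_S ^ 2 - R_E ^ 2 * Real.sin η ^ 2) - R_E * Real.cos η := by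
  have hRE : 0 ≤ R_E := hu ▸ norm_nonneg u
  have hcos : 0 ≤ cos η := cos_nonneg_of_mem_Icc ⟨by linarith [pi_pos], hη1⟩
  have hk : 0 ≤ ‖p - u‖ + R_E * cos η := by positivity
  have hB : 0 ≤ R_S ^ 2 - R_E ^ 2 := by nlinarith
  have hsq : R_S ^ 2 - R_E ^ 2 * sin η ^ 2 = (R_S ^ 2 - R_E ^ 2) + (R_E * cos η) ^ 2 := by
    rw [sin_sq]; ring
  rw [dist_comm, dist_eq_norm, hsq, le_sqrt_add_sq_sub_iff hk hB, real_inner_sub_left_self,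
    hu, hp]
  constructor <;> intro h <;> linarith

/-- For a user `u` on the Earth sphere of radius `R_E` and a satellite `p` on the
concentric sphere of radius `R_S`, the satellite lies within the user's service dome
of angle `η` (i.e. `⟪p - u, u⟫ ≥ ‖p - u‖ ‖u‖ cos η`) if and only if
`dist u p ≤ √(R_S² - R_E² sin² η) - R_E cos η`. -/
theorem satellite_in_dome_iff_distance_le
    (R_E R_S : ℝ) (hE : 0 < R_E) (hES : R_E < R_S)
    (η : ℝ) (hη0 : 0 ≤ η) (hη1 : η ≤ π / 2)
    (u p : EuclideanSpace ℝ (Fin 3)) (hu : ‖u‖ = R_E) (hp : ‖p‖ = R_S) :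
    (inner ℝ (p - u) u : ℝ) ≥ ‖p - u‖ * ‖u‖ * Real.cos η ↔
      dist u p ≤ Real.sqrt (R_S ^ 2 - R_E ^ 2 * Real.sin η ^ 2) - R_E * Real.cos η :=
  satellite_in_dome_iff_distance_le_general R_E R_S hES η hη0 hη1 u p hu hp
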